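/- For every w ∈ 𝔚_p one has w_0 w w_p ∈ 𝔚_p, and there exists a sign ε_p ∈ {1, −1}, depending only on p, such that for every w ∈ 𝔚_p and all s ∈ ℂ: X̃_{p,w}(−c_p − s) = X̃_{p, w_0 w w_p}(s), Q̃_{p,w}(−c_p − s) = ε_p Q̃_{p, w_0 w w_p}(s), and Q_p(−c_p − s) = ε_p Q_p(s); consequently X_p(−c_p − s) = ε_p X_p(s) for all s ∈ ℂ. -/

import Mathlib

/-! Write `a = w₀`, `b = w_p`. As `b` fixes `λ_p` and maps `Φ_p⁺` onto `-Φ_p⁺`, `b ρ = c_p λ_p - ρ`.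
Hence the substitution `α ↦ b⁻¹ α` keeps `⟨λ_p, α^∨⟩`, replaces `ht α^∨` by
`c_p ⟨λ_p, α^∨⟩ - ht α^∨`, and, since `a Φ⁺ = Φ⁻`, turns `δ_{α,w}` into `1 - δ_{α,w}` when `w` is
replaced by `a w b`. So the factor of `X̃_{p,w}(-c_p - s)` at `α` is the factor of `X̃_{p,awb}(s)`
at `b⁻¹ α`, by `ξ(1 - z) = ξ(z)` (the factor `z (z - 1)` of `Q_p` has the same symmetry); up to
sign `b⁻¹` permutes `Φ⁺ \ Δ_p`, and these factors are even in `α`. The remaining factors of `Q_p`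
are matched by `α ↦ -b⁻¹ α`, using that `-a` permutes `Δ`. Finally `w ↦ a w b` permutes `𝔚_p`,
so the sign is `ε_p = 1`. -/

open scoped Classical RealInnerProductSpace

noncomputable section

namespace Weng

/-- The completed Riemann zeta function `ζ̂(s) = π^(-s/2) Γ(s/2) ζ(s)`. -/
def zetaHat (s : ℂ) : ℂ := completedRiemannZeta s

/-- The entire Riemann xi function `ξ(s) = s (s-1) ζ̂(s)`
(written in terms of the entire function `Λ₀` so that the removable singularities
at `s = 0, 1` are correctly filled in). -/
def xi (s : ℂ) : ℂ := s * (s - 1) * completedRiemannZeta₀ s + 1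

variable (V : Type) [NormedAddCommGroup V] [InnerProductSpace ℝ V] [FiniteDimensional ℝ V]

/-- The coroot `α^∨ = 2 α / ⟨α, α⟩` of a vector `α`. -/
def coroot (α : V) : V := (2 / ⟪α, α⟫) • α

/-- Reflection in the hyperplane orthogonal to `α`. -/
def srefl (α : V) : V ≃ₗᵢ[ℝ] V := Submodule.reflection (ℝ ∙ α)ᗮ

variable {V}

/-- A reduced irreducible crystallographic root system `Φ` in a finite dimensional real
inner product space `V`, together with a fundamental system `Δ = {α_1, …, α_r}` (indexed by
`Fin r`), the corresponding positive system `Φ⁺` (`Pos`), and the fundamental weights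
`λ_1, …, λ_r` (`fw`). -/
structure RootSystemData (V : Type) [NormedAddCommGroup V] [InnerProductSpace ℝ V]
    [FiniteDimensional ℝ V] : Type where
  /-- the rank -/
  r : ℕ
  /-- the root system -/
  Φ : Finset V
  /-- the simple roots -/
  Δ : Fin r → V
  /-- the positive roots -/
  Pos : Finset V
  /-- the fundamental weights -/
  fw : Fin r → V
  hΔinj : Function.Injective Δ
  hΔPos : ∀ j, Δ j ∈ Pos
  hspan : Submodule.span ℝ (Φ : Set V) = ⊤
  hzero : (0 : V) ∉ Φ
  hreduced : ∀ α ∈ Φ, ∀ t : ℝ, t • α ∈ (Φ : Set V) → t = 1 ∨ t = -1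
  hcrys : ∀ α ∈ Φ, ∀ β ∈ Φ, ∃ n : ℤ, ⟪β, coroot V α⟫ = (n : ℝ)
  hrefl : ∀ α ∈ Φ, ∀ β ∈ Φ, β - ⟪β, coroot V α⟫ • α ∈ Φ
  hirred : ∀ S T : Finset V, S ∪ T = Φ → (∀ a ∈ S, ∀ b ∈ T, ⟪a, b⟫ = 0) →
    S = ∅ ∨ T = ∅
  hPosSub : Pos ⊆ Φ
  hNegSub : ∀ α ∈ Pos, -α ∈ Φ
  hPosDec : ∀ α ∈ Φ, (α ∈ Pos ∧ -α ∉ Pos) ∨ (α ∉ Pos ∧ -α ∈ Pos)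
  hPosComb : ∀ α ∈ Pos, ∃ c : Fin r → ℕ, α = ∑ j, (c j : ℝ) • Δ j
  hfw : ∀ i j, ⟪fw i, coroot V (Δ j)⟫ = if i = j then 1 else 0

namespace RootSystemData

variable {V : Type} [NormedAddCommGroup V] [InnerProductSpace ℝ V] [FiniteDimensional ℝ V]
variable (d : RootSystemData V)

/-- The set `Φ⁻ = -Φ⁺` of negative roots, as a `Finset`. -/
def NegS : Finset V := d.Pos.image (fun α => -α)

/-- The Weyl vector `ρ = (1/2) Σ_{α ∈ Φ⁺} α`. -/
def rho : V := (2⁻¹ : ℝ) • ∑ α ∈ d.Pos, α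

/-- The height `ht α^∨ = ⟨ρ, α^∨⟩` of the coroot of `α`. -/
def ht (α : V) : ℝ := ⟪d.rho, coroot V α⟫

/-- The Weyl group `W`, as the subgroup of the group of linear isometries of `V`
generated by the reflections in the simple roots. -/
def W : Subgroup (V ≃ₗᵢ[ℝ] V) := Subgroup.closure (Set.range fun j => srefl V (d.Δ j))

/-- The subset `Δ_p = Δ \ {α_p}` of the simple roots, as a set of vectors. -/
def DeltaP (p : Fin d.r) : Set V := d.Δ '' {j | j ≠ p}

/-- `Δ_p` as a `Finset`. -/
def DeltaPFin (p : Fin d.r) : Finset V := (Finset.univ.filter (fun j => j ≠ p)).image d.Δ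

/-- The subgroup `W_p` of `W` generated by the reflections in the simple roots in `Δ_p`. -/
def Wp (p : Fin d.r) : Subgroup (V ≃ₗᵢ[ℝ] V) :=
  Subgroup.closure ((fun j => srefl V (d.Δ j)) '' {j | j ≠ p})

/-- The root subsystem `Φ_p = Φ ∩ span_ℝ(Δ_p)`. -/
def PhiP (p : Fin d.r) : Finset V :=
  d.Φ.filter (fun α => α ∈ Submodule.span ℝ (d.DeltaP p))

/-- The positive system `Φ_p⁺ = Φ⁺ ∩ Φ_p` of `Φ_p`. -/
def PhiPpos (p : Fin d.r) : Finset V := d.Pos ∩ d.PhiP p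

/-- `ρ_p = (1/2) Σ_{α ∈ Φ_p⁺} α`. -/
def rhoP (p : Fin d.r) : V := (2⁻¹ : ℝ) • ∑ α ∈ d.PhiPpos p, α

/-- The constant `c_p = 2 ⟨λ_p - ρ_p, α_p^∨⟩`. -/
def cp (p : Fin d.r) : ℝ := 2 * ⟪d.fw p - d.rhoP p, coroot V (d.Δ p)⟫

/-- The set `𝔚_p = {w ∈ W : Δ_p ⊆ w⁻¹(Δ ∪ Φ⁻)}`. -/
def frakW (p : Fin d.r) : Set (V ≃ₗᵢ[ℝ] V) :=
  {w | w ∈ d.W ∧ ∀ j : Fin d.r, j ≠ p →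
    (w (d.Δ j) ∈ Set.range d.Δ ∨ w (d.Δ j) ∈ d.NegS)}

/-- `l_p(w) = |(Φ⁺ \ Φ_p⁺) ∩ w⁻¹ Φ⁻|`. -/
def lp (p : Fin d.r) (w : V ≃ₗᵢ[ℝ] V) : ℕ :=
  ((d.Pos \ d.PhiPpos p).filter (fun α => w α ∈ d.NegS)).card

/-- `N_{p,w}(k,h) = #{α ∈ w⁻¹Φ⁻ : ⟨λ_p, α^∨⟩ = k, ht α^∨ = h}`. -/
def Npw (p : Fin d.r) (w : V ≃ₗᵢ[ℝ] V) (k h : ℝ) : ℕ :=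
  (d.Φ.filter (fun α => w α ∈ d.NegS ∧ ⟪d.fw p, coroot V α⟫ = k ∧ d.ht α = h)).card

/-- `N_p(k,h) = #{α ∈ Φ : ⟨λ_p, α^∨⟩ = k, ht α^∨ = h}`. -/
def Np (p : Fin d.r) (k h : ℝ) : ℕ :=
  (d.Φ.filter (fun α => ⟪d.fw p, coroot V α⟫ = k ∧ d.ht α = h)).card

/-- `M_p(k,h) = max_{w ∈ 𝔚_p} (N_{p,w}(k,h-1) - N_{p,w}(k,h))`. -/
def Mp (p : Fin d.r) (k h : ℝ) : ℤ :=
  sSup {n : ℤ | ∃ w ∈ d.frakW p, n = (d.Npw p w k (h - 1) : ℤ) - (d.Npw p w k h : ℤ)}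

/-- The period `ω_p(s)`. -/
def omegaP (p : Fin d.r) (s : ℂ) : ℂ :=
  ∑ᶠ w ∈ d.frakW p,
    (∏ α ∈ d.Φ.filter (fun α => w α ∈ Set.range d.Δ ∧ α ∉ d.DeltaP p),
        ((⟪d.fw p, coroot V α⟫ : ℂ) * s + (d.ht α : ℂ) - 1)⁻¹) *
    (∏ α ∈ d.Pos.filter (fun α => w α ∈ d.NegS ∧ α ∉ d.DeltaP p),
        zetaHat ((⟪d.fw p, coroot V α⟫ : ℂ) * s + (d.ht α : ℂ))) *
    (∏ α ∈ d.Φ.filter (fun α => -α ∈ d.Pos ∧ w (-α) ∈ d.NegS),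
        (zetaHat ((⟪d.fw p, coroot V α⟫ : ℂ) * s + (d.ht α : ℂ)))⁻¹)

/-- The Weng zeta function
`ζ̂_p(s) = ω_p(s) ∏_{k ≥ 0} ∏_{h ≥ 2} ζ̂(k s + h)^{M_p(k,h)}`
(the product is finite: `M_p(k,h) = 0` outside of the displayed finite range). -/
def zetaWeng (p : Fin d.r) (s : ℂ) : ℂ :=
  d.omegaP p s *
    ∏ k ∈ Finset.range (d.Φ.card + 2), ∏ h ∈ Finset.range (d.Φ.card + 2),
      (if 2 ≤ h then zetaHat ((k : ℂ) * s + (h : ℂ)) ^ (d.Mp p (k : ℝ) (h : ℝ)) else 1)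


/-- `δ_{α,w} = 1` if `α ∈ w⁻¹Φ⁺`, and `δ_{α,w} = 0` if `α ∈ w⁻¹Φ⁻`. -/
def deltaIdx (w : V ≃ₗᵢ[ℝ] V) (α : V) : ℕ := if w α ∈ d.Pos then 1 else 0

/-- `X̃_{p,w}(s) = ξ(2)^{|Δ_p ∩ w⁻¹Φ⁺|} ∏_{α ∈ Φ⁺ \ Δ_p} ξ(⟨λ_p,α^∨⟩ s + ht α^∨ + δ_{α,w})`. -/
def Xtilde (p : Fin d.r) (w : V ≃ₗᵢ[ℝ] V) (s : ℂ) : ℂ :=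
  xi 2 ^ ((d.DeltaPFin p).filter (fun α => w α ∈ d.Pos)).card *
  ∏ α ∈ d.Pos.filter (fun α => α ∉ d.DeltaP p),
    xi ((⟪d.fw p, coroot V α⟫ : ℂ) * s + (d.ht α : ℂ) + (d.deltaIdx w α : ℂ))

/-- The polynomial factor attached to a single `v ∈ 𝔚_p` appearing in `Q̃_{p,w}` and `Q_p`. -/
def Qfactor (p : Fin d.r) (v : V ≃ₗᵢ[ℝ] V) (s : ℂ) : ℂ :=
  (2 : ℂ) ^ ((d.DeltaPFin p).filter (fun α => v α ∈ d.Pos)).card *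
  (∏ α ∈ d.Φ.filter (fun α => v α ∈ Set.range d.Δ ∧ α ∉ d.DeltaP p),
      ((⟪d.fw p, coroot V α⟫ : ℂ) * s + (d.ht α : ℂ) - 1)) *
  ∏ α ∈ d.Pos.filter (fun α => α ∉ d.DeltaP p),
    ((⟪d.fw p, coroot V α⟫ : ℂ) * s + (d.ht α : ℂ) + (d.deltaIdx v α : ℂ)) *
      ((⟪d.fw p, coroot V α⟫ : ℂ) * s + (d.ht α : ℂ) + (d.deltaIdx v α : ℂ) - 1)

/-- The polynomial `Q̃_{p,w}(s)` (product of the `Qfactor`s over all `v ∈ 𝔚_p`, `v ≠ w`). -/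
def Qtilde (p : Fin d.r) (w : V ≃ₗᵢ[ℝ] V) (s : ℂ) : ℂ :=
  ∏ᶠ v ∈ d.frakW p \ {w}, d.Qfactor p v s

/-- The polynomial `Q_p(s)` (product of the `Qfactor`s over all `v ∈ 𝔚_p`). -/
def Qp (p : Fin d.r) (s : ℂ) : ℂ := ∏ᶠ v ∈ d.frakW p, d.Qfactor p v s

/-- The entire function `X_p(s) = Σ_{w ∈ 𝔚_p} Q̃_{p,w}(s) X̃_{p,w}(s)`. -/
def Xp (p : Fin d.r) (s : ℂ) : ℂ := ∑ᶠ w ∈ d.frakW p, d.Qtilde p w s * d.Xtilde p w s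

/-- `X_{p,w}(s) = ∏_{α ∈ Φ⁺ \ Φ_p⁺} ξ(⟨λ_p,α^∨⟩ s + ht α^∨ + δ_{α,w})`. -/
def Xpw (p : Fin d.r) (w : V ≃ₗᵢ[ℝ] V) (s : ℂ) : ℂ :=
  ∏ α ∈ d.Pos \ d.PhiPpos p,
    xi ((⟪d.fw p, coroot V α⟫ : ℂ) * s + (d.ht α : ℂ) + (d.deltaIdx w α : ℂ))

/-- The constant `C_{p,w} = ξ(2)^{|Δ_p ∩ w⁻¹Φ⁺|} ∏_{α ∈ Φ_p⁺ \ Δ_p} ξ(ht α^∨ + δ_{α,w})`. -/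
def Cpw (p : Fin d.r) (w : V ≃ₗᵢ[ℝ] V) : ℂ :=
  xi 2 ^ ((d.DeltaPFin p).filter (fun α => w α ∈ d.Pos)).card *
  ∏ α ∈ (d.PhiPpos p).filter (fun α => α ∉ d.DeltaP p),
    xi ((d.ht α : ℂ) + (d.deltaIdx w α : ℂ))

/-- `Q_{p,w}(s) = C_{p,w} Q̃_{p,w}(s)`. -/
def Qpw (p : Fin d.r) (w : V ≃ₗᵢ[ℝ] V) (s : ℂ) : ℂ := d.Cpw p w * d.Qtilde p w s

/-- `𝔚_p⁺ = {w ∈ 𝔚_p : l_p(w) < |Φ⁺ \ Φ_p⁺| / 2}`. -/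
def frakWplus (p : Fin d.r) : Set (V ≃ₗᵢ[ℝ] V) :=
  {w ∈ d.frakW p | 2 * d.lp p w < (d.Pos \ d.PhiPpos p).card}

/-- `𝔚_p⁰ = {w ∈ 𝔚_p : l_p(w) = |Φ⁺ \ Φ_p⁺| / 2}`. -/
def frakWzero (p : Fin d.r) : Set (V ≃ₗᵢ[ℝ] V) :=
  {w ∈ d.frakW p | 2 * d.lp p w = (d.Pos \ d.PhiPpos p).card}

/-- `𝔚_p‡ = {w ∈ 𝔚_p : l_p(w) = 0}`. -/
def frakWdag (p : Fin d.r) : Set (V ≃ₗᵢ[ℝ] V) :=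
  {w ∈ d.frakW p | d.lp p w = 0}

/-- `E_p(s) = Σ_{w ∈ 𝔚_p⁺} Q_{p,w}(s) X_{p,w}(s) + (1/2) Σ_{w ∈ 𝔚_p⁰} Q_{p,w}(s) X_{p,w}(s)`. -/
def Ep (p : Fin d.r) (s : ℂ) : ℂ :=
  (∑ᶠ w ∈ d.frakWplus p, d.Qpw p w s * d.Xpw p w s) +
    (2 : ℂ)⁻¹ * ∑ᶠ w ∈ d.frakWzero p, d.Qpw p w s * d.Xpw p w s

end RootSystemData

end Weng

namespace Finset

variable {ι M : Type*} [CommMonoid M]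

@[to_additive]
theorem prod_comp_eq_of_injOn {s : Finset ι} {i : ι → ι} (hi : Set.MapsTo i s s)
    (hinj : Set.InjOn i s) (f : ι → M) : ∏ x ∈ s, f (i x) = ∏ x ∈ s, f x :=
  prod_nbij i hi hinj (surjOn_of_injOn_of_card_le i hi hinj le_rfl) fun _ _ => rfl

/-- The map `x ↦ ±f x` landing back in `s` permutes `s`, and `g` does not see the sign. -/
theorem prod_comp_eq_of_mapsTo_or_neg {G : Type*} [InvolutiveNeg G] {s : Finset G}
    {f : G → G} (hf : Function.Injective f) (hf_neg : ∀ x, f (-x) = -f x)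
    (hs : ∀ x ∈ s, -x ∉ s) (hmaps : ∀ x ∈ s, f x ∈ s ∨ -f x ∈ s) {g : G → M}
    (hg : ∀ x ∈ s, g (-f x) = g (f x)) : ∏ x ∈ s, g (f x) = ∏ x ∈ s, g x := by
  classical
  set σ : G → G := fun x => if f x ∈ s then f x else -f x
  have hσ : Set.MapsTo σ s s := fun x hx => by
    by_cases h : f x ∈ s
    · simpa only [σ, if_pos h, mem_coe] using h
    · simpa only [σ, if_neg h, mem_coe] using (hmaps x hx).resolve_left h
  have hσinj : Set.InjOn σ s := by
    intro x hx y hy hxy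
    simp only [σ] at hxy
    split_ifs at hxy
    · exact hf hxy
    · exact absurd (hf (hxy.trans (hf_neg y).symm) ▸ hx) (hs y hy)
    · exact absurd (hf ((hf_neg x).trans hxy) ▸ hy) (hs x hx)
    · exact hf (neg_inj.mp hxy)
  calc ∏ x ∈ s, g (f x) = ∏ x ∈ s, g (σ x) := prod_congr rfl fun x hx => by
        by_cases h : f x ∈ s
        · simp only [σ, if_pos h]
        · simp only [σ, if_neg h, hg x hx]
    _ = ∏ x ∈ s, g x := prod_comp_eq_of_injOn hσ hσinj g

end Finset

namespace Weng

variable {V : Type} [NormedAddCommGroup V] [InnerProductSpace ℝ V]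

theorem inner_coroot (α x : V) : ⟪x, coroot V α⟫ = 2 / ⟪α, α⟫ * ⟪x, α⟫ :=
  real_inner_smul_right _ _ _

theorem inner_self_coroot {α : V} (hα : α ≠ 0) : ⟪α, coroot V α⟫ = 2 := by
  rw [inner_coroot, div_mul_cancel₀ _ (inner_self_ne_zero.mpr hα)]

theorem inner_coroot_eq_zero_iff {α : V} (hα : α ≠ 0) (x : V) :
    ⟪x, coroot V α⟫ = 0 ↔ ⟪x, α⟫ = 0 := by
  rw [inner_coroot, mul_eq_zero, or_iff_right (div_ne_zero two_ne_zero
    (inner_self_ne_zero.mpr hα))]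

theorem coroot_neg (α : V) : coroot V (-α) = -coroot V α := by
  rw [coroot, coroot, inner_neg_neg, smul_neg]

theorem coroot_map (u : V ≃ₗᵢ[ℝ] V) (α : V) : coroot V (u α) = u (coroot V α) := by
  rw [coroot, coroot, u.inner_map_map, map_smul]

theorem inner_coroot_symm_apply (u : V ≃ₗᵢ[ℝ] V) (x α : V) :
    ⟪x, coroot V (u.symm α)⟫ = ⟪u x, coroot V α⟫ := by
  rw [coroot_map, u.inner_map_eq_flip]

theorem srefl_apply (α x : V) : srefl V α x = x - ⟪x, coroot V α⟫ • α := by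
  rw [srefl, Submodule.reflection_orthogonal_apply, Submodule.reflection_singleton_apply,
    inner_coroot, real_inner_comm]
  simp only [RCLike.ofReal_real_eq_id, id_eq, ← real_inner_self_eq_norm_sq]
  module

theorem srefl_srefl (α x : V) : srefl V α (srefl V α x) = x :=
  Submodule.reflection_reflection _ _

theorem inner_srefl_coroot {α : V} (hα : α ≠ 0) (x : V) :
    ⟪srefl V α x, coroot V α⟫ = -⟪x, coroot V α⟫ := by
  rw [srefl_apply, inner_sub_left, real_inner_smul_left, inner_self_coroot hα]
  ring

/-- The reflection in `α` fixes `∑ (S \ {α})` and negates `α`, so `⟪∑ S, α^∨⟫ = ⟪α, α^∨⟫`. -/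
theorem inner_half_sum_coroot {S : Finset V} {α : V} (hα : α ≠ 0) (hαS : α ∈ S)
    (hS : Set.MapsTo (srefl V α) (S.erase α) (S.erase α)) :
    ⟪(2⁻¹ : ℝ) • ∑ β ∈ S, β, coroot V α⟫ = 1 := by
  have hfix : srefl V α (∑ β ∈ S.erase α, β) = ∑ β ∈ S.erase α, β := by
    rw [map_sum]
    exact Finset.sum_comp_eq_of_injOn hS (srefl V α).injective.injOn id
  have hzero : ⟪∑ β ∈ S.erase α, β, coroot V α⟫ = 0 := by
    have h := inner_srefl_coroot hα (∑ β ∈ S.erase α, β)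
    rw [hfix] at h
    linarith
  rw [real_inner_smul_left, ← Finset.add_sum_erase S (fun β => β) hαS, inner_add_left, hzero,
    inner_self_coroot hα]
  norm_num

theorem inner_neg_apply_sum {ι : Type*} (u : V ≃ₗᵢ[ℝ] V) (x : V) (s : Finset ι) (c : ι → ℝ)
    (v : ι → V) : ⟪x, -(u (∑ i ∈ s, c i • v i))⟫ = ∑ i ∈ s, c i * ⟪x, -(u (v i))⟫ := by
  simp only [map_sum, map_smul, ← Finset.sum_neg_distrib, ← smul_neg, inner_sum,
    real_inner_smul_right]

theorem neg_symm_mem_of_forall_neg_mem {S : Finset V} {u : V ≃ₗᵢ[ℝ] V}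
    (h : ∀ x ∈ S, -(u x) ∈ S) {y : V} (hy : y ∈ S) : -(u.symm y) ∈ S := by
  obtain ⟨x, hx, rfl⟩ := Finset.surjOn_of_injOn_of_card_le (fun x => -(u x)) h
    (fun x _ y _ hxy => u.injective (neg_inj.mp hxy)) le_rfl hy
  simpa using hx

theorem mul_mul_apply (a w b : V ≃ₗᵢ[ℝ] V) (x : V) : (a * w * b) x = a (w (b x)) := rfl

theorem xi_one_sub (z : ℂ) : xi (1 - z) = xi z := by
  rw [xi, xi, completedRiemannZeta₀_one_sub]
  ring

namespace RootSystemData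

variable [FiniteDimensional ℝ V] (d : RootSystemData V)

theorem mem_phi_of_mem_pos {α : V} (hα : α ∈ d.Pos) : α ∈ d.Φ := d.hPosSub hα

theorem ne_zero_of_mem_phi {α : V} (hα : α ∈ d.Φ) : α ≠ 0 := fun h => d.hzero (h ▸ hα)

theorem delta_mem_phi (j : Fin d.r) : d.Δ j ∈ d.Φ := d.mem_phi_of_mem_pos (d.hΔPos j)

theorem delta_ne_zero (j : Fin d.r) : d.Δ j ≠ 0 := d.ne_zero_of_mem_phi (d.delta_mem_phi j)

theorem neg_mem_phi {α : V} (hα : α ∈ d.Φ) : -α ∈ d.Φ := by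
  rcases d.hPosDec α hα with ⟨h, -⟩ | ⟨-, h⟩
  · exact d.hNegSub α h
  · exact d.mem_phi_of_mem_pos h

theorem mem_pos_or_neg_mem_pos {α : V} (hα : α ∈ d.Φ) : α ∈ d.Pos ∨ -α ∈ d.Pos :=
  (d.hPosDec α hα).imp And.left And.right

theorem neg_not_mem_pos {α : V} (hα : α ∈ d.Pos) : -α ∉ d.Pos :=
  ((d.hPosDec α (d.mem_phi_of_mem_pos hα)).resolve_right fun h => h.1 hα).2

theorem neg_mem_pos_iff {α : V} (hα : α ∈ d.Φ) : -α ∈ d.Pos ↔ α ∉ d.Pos :=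
  ⟨fun h h' => d.neg_not_mem_pos h' h, (d.mem_pos_or_neg_mem_pos hα).resolve_left⟩

theorem mem_negS_iff {x : V} : x ∈ d.NegS ↔ -x ∈ d.Pos := by
  simp only [NegS, Finset.mem_image]
  exact ⟨fun ⟨y, hy, hyx⟩ => by rwa [← hyx, neg_neg], fun h => ⟨-x, h, neg_neg x⟩⟩

theorem inner_fw_delta_of_ne {i j : Fin d.r} (h : i ≠ j) : ⟪d.fw i, d.Δ j⟫ = 0 := by
  have := d.hfw i j
  rwa [if_neg h, inner_coroot_eq_zero_iff (d.delta_ne_zero j)] at this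

theorem inner_fw_delta_self_pos (i : Fin d.r) : 0 < ⟪d.fw i, d.Δ i⟫ := by
  have h := d.hfw i i
  rw [if_pos rfl, inner_coroot] at h
  have : 0 < 2 / ⟪d.Δ i, d.Δ i⟫ := div_pos two_pos (real_inner_self_pos.mpr (d.delta_ne_zero i))
  exact pos_of_mul_pos_right (h ▸ one_pos) this.le

theorem inner_fw_sum_smul_delta (i : Fin d.r) (c : Fin d.r → ℝ) :
    ⟪d.fw i, ∑ j, c j • d.Δ j⟫ = c i * ⟪d.fw i, d.Δ i⟫ := by
  rw [inner_sum, Finset.sum_eq_single i (fun j _ hj => by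
    rw [real_inner_smul_right, d.inner_fw_delta_of_ne (Ne.symm hj), mul_zero]) (by simp),
    real_inner_smul_right]

theorem inner_fw_nonneg_of_mem_pos {β : V} (hβ : β ∈ d.Pos) (i : Fin d.r) :
    0 ≤ ⟪d.fw i, β⟫ := by
  obtain ⟨c, rfl⟩ := d.hPosComb β hβ
  rw [d.inner_fw_sum_smul_delta]
  exact mul_nonneg (Nat.cast_nonneg _) (d.inner_fw_delta_self_pos i).le

theorem coeff_eq_zero_of_inner_fw_eq_zero {c : Fin d.r → ℕ} {i : Fin d.r}
    (h : ⟪d.fw i, ∑ j, (c j : ℝ) • d.Δ j⟫ = 0) : c i = 0 := by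
  rw [d.inner_fw_sum_smul_delta] at h
  exact_mod_cast (mul_eq_zero.mp h).resolve_right (d.inner_fw_delta_self_pos i).ne'

theorem exists_inner_fw_pos {β : V} (hβ : β ∈ d.Pos) : ∃ i, 0 < ⟪d.fw i, β⟫ := by
  by_contra! h
  obtain ⟨c, rfl⟩ := d.hPosComb β hβ
  have hc : ∀ i, c i = 0 := fun i => d.coeff_eq_zero_of_inner_fw_eq_zero
    ((h i).antisymm (d.inner_fw_nonneg_of_mem_pos hβ i))
  apply d.ne_zero_of_mem_phi (d.mem_phi_of_mem_pos hβ)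
  simp [hc]

theorem mem_pos_of_inner_fw_nonneg {β : V} (hβ : β ∈ d.Φ) (h : ∀ i, 0 ≤ ⟪d.fw i, β⟫) :
    β ∈ d.Pos := by
  refine (d.mem_pos_or_neg_mem_pos hβ).resolve_right fun hneg => ?_
  obtain ⟨i, hi⟩ := d.exists_inner_fw_pos hneg
  rw [inner_neg_right] at hi
  linarith [h i]

theorem eq_delta_of_inner_fw_eq_zero {β : V} (hβ : β ∈ d.Pos) {j : Fin d.r}
    (h : ∀ i, i ≠ j → ⟪d.fw i, β⟫ = 0) : β = d.Δ j := by
  obtain ⟨c, rfl⟩ := d.hPosComb β hβ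
  have hsingle : ∑ i, (c i : ℝ) • d.Δ i = (c j : ℝ) • d.Δ j := Finset.sum_eq_single j
    (fun i _ hi => by rw [d.coeff_eq_zero_of_inner_fw_eq_zero (h i hi), Nat.cast_zero, zero_smul])
    (by simp)
  rw [hsingle] at hβ ⊢
  rcases d.hreduced _ (d.delta_mem_phi j) _ (d.mem_phi_of_mem_pos hβ) with h1 | h1
  · rw [h1, one_smul]
  · linarith [Nat.cast_nonneg (α := ℝ) (c j)]

theorem mem_span_delta_of_mem_pos {β : V} (hβ : β ∈ d.Pos) :
    β ∈ Submodule.span ℝ (Set.range d.Δ) := by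
  obtain ⟨c, rfl⟩ := d.hPosComb β hβ
  exact Submodule.sum_mem _ fun j _ => Submodule.smul_mem _ _ (Submodule.subset_span ⟨j, rfl⟩)

theorem eq_zero_of_inner_coroot_delta {v : V} (hv : ∀ j, ⟪v, coroot V (d.Δ j)⟫ = 0) :
    v = 0 := by
  have htop : Submodule.span ℝ (Set.range d.Δ) = ⊤ := by
    refine eq_top_iff.mpr (d.hspan ▸ Submodule.span_le.mpr fun α hα => ?_)
    rcases d.mem_pos_or_neg_mem_pos hα with h | h
    · exact d.mem_span_delta_of_mem_pos h
    · simpa using Submodule.neg_mem _ (d.mem_span_delta_of_mem_pos h)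
  have hker : Submodule.span ℝ (Set.range d.Δ) ≤ LinearMap.ker (innerₛₗ ℝ v) := by
    rw [Submodule.span_le]
    rintro _ ⟨j, rfl⟩
    exact (inner_coroot_eq_zero_iff (d.delta_ne_zero j) v).mp (hv j)
  rw [htop, top_le_iff, LinearMap.ker_eq_top] at hker
  simpa using LinearMap.congr_fun hker v

theorem mem_phiPpos_iff {p : Fin d.r} {α : V} :
    α ∈ d.PhiPpos p ↔ α ∈ d.Pos ∧ ⟪d.fw p, α⟫ = 0 := by
  simp only [PhiPpos, PhiP, Finset.mem_inter, Finset.mem_filter]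
  refine ⟨fun ⟨hα, _, hspan⟩ => ⟨hα, ?_⟩, fun ⟨hα, h0⟩ => ⟨hα, d.mem_phi_of_mem_pos hα, ?_⟩⟩
  · have hker : Submodule.span ℝ (d.DeltaP p) ≤ LinearMap.ker (innerₛₗ ℝ (d.fw p)) := by
      rw [Submodule.span_le]
      rintro _ ⟨j, hj, rfl⟩
      exact d.inner_fw_delta_of_ne (Ne.symm hj)
    exact hker hspan
  · obtain ⟨c, rfl⟩ := d.hPosComb α hα
    refine Submodule.sum_mem _ fun j _ => ?_
    by_cases hj : j = p
    · rw [hj, d.coeff_eq_zero_of_inner_fw_eq_zero h0, Nat.cast_zero, zero_smul]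
      exact Submodule.zero_mem _
    · exact Submodule.smul_mem _ _ (Submodule.subset_span ⟨j, hj, rfl⟩)

theorem srefl_delta_self (j : Fin d.r) : srefl V (d.Δ j) (d.Δ j) = -d.Δ j :=
  Submodule.reflection_orthogonalComplement_singleton_eq_neg _

theorem srefl_delta_mem_phi (j : Fin d.r) {α : V} (hα : α ∈ d.Φ) :
    srefl V (d.Δ j) α ∈ d.Φ := by
  rw [srefl_apply]
  exact d.hrefl _ (d.delta_mem_phi j) α hα

theorem inner_fw_srefl_delta {i j : Fin d.r} (h : i ≠ j) (x : V) :
    ⟪d.fw i, srefl V (d.Δ j) x⟫ = ⟪d.fw i, x⟫ := by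
  rw [srefl_apply, inner_sub_right, real_inner_smul_right, d.inner_fw_delta_of_ne h, mul_zero,
    sub_zero]

theorem srefl_delta_mapsTo_pos_erase (j : Fin d.r) :
    Set.MapsTo (srefl V (d.Δ j)) (d.Pos.erase (d.Δ j)) (d.Pos.erase (d.Δ j)) := by
  intro β hβ
  rw [Finset.mem_coe, Finset.mem_erase] at hβ ⊢
  obtain ⟨hne, hβ⟩ := hβ
  refine ⟨fun h => d.neg_not_mem_pos (d.hΔPos j) ?_, ?_⟩
  · have hβneg := congrArg (srefl V (d.Δ j)) h
    rw [srefl_srefl, d.srefl_delta_self] at hβneg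
    rwa [← hβneg]
  · refine (d.mem_pos_or_neg_mem_pos
      (d.srefl_delta_mem_phi j (d.mem_phi_of_mem_pos hβ))).resolve_right fun hneg => hne ?_
    refine d.eq_delta_of_inner_fw_eq_zero hβ fun i hi => ?_
    have h := d.inner_fw_nonneg_of_mem_pos hneg i
    rw [inner_neg_right, d.inner_fw_srefl_delta hi] at h
    linarith [d.inner_fw_nonneg_of_mem_pos hβ i]

theorem delta_mem_phiPpos {p j : Fin d.r} (hj : j ≠ p) : d.Δ j ∈ d.PhiPpos p :=
  d.mem_phiPpos_iff.mpr ⟨d.hΔPos j, d.inner_fw_delta_of_ne (Ne.symm hj)⟩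

theorem srefl_delta_mapsTo_phiPpos_erase {p j : Fin d.r} (hj : j ≠ p) :
    Set.MapsTo (srefl V (d.Δ j)) ((d.PhiPpos p).erase (d.Δ j)) ((d.PhiPpos p).erase (d.Δ j)) := by
  intro β hβ
  rw [Finset.mem_coe, Finset.mem_erase, d.mem_phiPpos_iff] at hβ ⊢
  obtain ⟨hne, hβ, hβp⟩ := hβ
  have h := d.srefl_delta_mapsTo_pos_erase j (Finset.mem_erase.mpr ⟨hne, hβ⟩)
  rw [Finset.mem_coe, Finset.mem_erase] at h
  exact ⟨h.1, h.2, by rwa [d.inner_fw_srefl_delta (Ne.symm hj)]⟩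

theorem inner_rho_coroot_delta (j : Fin d.r) : ⟪d.rho, coroot V (d.Δ j)⟫ = 1 :=
  inner_half_sum_coroot (d.delta_ne_zero j) (d.hΔPos j) (d.srefl_delta_mapsTo_pos_erase j)

theorem inner_rhoP_coroot_delta {p j : Fin d.r} (hj : j ≠ p) :
    ⟪d.rhoP p, coroot V (d.Δ j)⟫ = 1 :=
  inner_half_sum_coroot (d.delta_ne_zero j) (d.delta_mem_phiPpos hj)
    (d.srefl_delta_mapsTo_phiPpos_erase hj)

/-- Both sides pair to `0` with `α_j^∨`, `j ≠ p`, and to `c_p / 2` with `α_p^∨`. -/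
theorem rho_sub_rhoP (p : Fin d.r) : d.rho - d.rhoP p = (d.cp p / 2) • d.fw p := by
  refine sub_eq_zero.mp (d.eq_zero_of_inner_coroot_delta fun j => ?_)
  rw [inner_sub_left, inner_sub_left, real_inner_smul_left, d.hfw, d.inner_rho_coroot_delta]
  by_cases hj : j = p
  · subst hj
    rw [if_pos rfl, cp, inner_sub_left, d.hfw, if_pos rfl]
    ring
  · rw [d.inner_rhoP_coroot_delta hj, if_neg (Ne.symm hj)]
    ring

theorem ht_neg (α : V) : d.ht (-α) = -d.ht α := by
  rw [ht, ht, coroot_neg, inner_neg_right]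

theorem apply_mem_phi_iff {w : V ≃ₗᵢ[ℝ] V} (hw : w ∈ d.W) (x : V) : w x ∈ d.Φ ↔ x ∈ d.Φ := by
  induction hw using Subgroup.closure_induction generalizing x with
  | mem u hu =>
    obtain ⟨j, rfl⟩ := hu
    refine ⟨fun h => ?_, d.srefl_delta_mem_phi j⟩
    simpa only [srefl_srefl] using d.srefl_delta_mem_phi j h
  | one => rfl
  | mul u v _ _ hu hv => exact (hu (v x)).trans (hv x)
  | inv u _ hu => simpa using (hu (u⁻¹ x)).symm

theorem Wp_le_W (p : Fin d.r) : d.Wp p ≤ d.W :=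
  Subgroup.closure_mono (Set.image_subset_range _ _)

theorem symm_apply_mem_phi_of_mem_Wp {p : Fin d.r} {b : V ≃ₗᵢ[ℝ] V} (hbW : b ∈ d.Wp p)
    {α : V} (hα : α ∈ d.Φ) : b.symm α ∈ d.Φ :=
  (d.apply_mem_phi_iff (inv_mem (d.Wp_le_W p hbW)) α).mpr hα

theorem apply_fw_of_mem_Wp {p : Fin d.r} {b : V ≃ₗᵢ[ℝ] V} (hb : b ∈ d.Wp p) :
    b (d.fw p) = d.fw p := by
  induction hb using Subgroup.closure_induction with
  | mem u hu =>
    obtain ⟨j, hj, rfl⟩ := hu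
    rw [srefl_apply, d.hfw, if_neg (Ne.symm hj), zero_smul, sub_zero]
  | one => rfl
  | mul u v _ _ hu hv => rw [LinearIsometryEquiv.coe_mul, Function.comp_apply, hv, hu]
  | inv u _ hu => rw [LinearIsometryEquiv.coe_inv, LinearIsometryEquiv.symm_apply_eq, hu]

theorem inner_fw_apply_of_mem_Wp {p : Fin d.r} {b : V ≃ₗᵢ[ℝ] V} (hb : b ∈ d.Wp p) (x : V) :
    ⟪d.fw p, b x⟫ = ⟪d.fw p, x⟫ := by
  conv_lhs => rw [← d.apply_fw_of_mem_Wp hb]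
  exact b.inner_map_map _ _

def NegatesPos (a : V ≃ₗᵢ[ℝ] V) : Prop := ∀ α ∈ d.Pos, -(a α) ∈ d.Pos

def NegatesDeltaP (p : Fin d.r) (b : V ≃ₗᵢ[ℝ] V) : Prop :=
  ∀ j, j ≠ p → -(b (d.Δ j)) ∈ d.DeltaP p

theorem mem_pos_of_mem_deltaP {p : Fin d.r} {x : V} (hx : x ∈ d.DeltaP p) : x ∈ d.Pos := by
  obtain ⟨j, -, rfl⟩ := hx
  exact d.hΔPos j

theorem mem_deltaPFin_iff {p : Fin d.r} {x : V} : x ∈ d.DeltaPFin p ↔ x ∈ d.DeltaP p := by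
  simp [DeltaPFin, DeltaP]

/-- Writing `y = ∑ cⱼ αⱼ`, each `-a αⱼ` with `cⱼ ≠ 0` is a positive root orthogonal to all `λᵢ`,
`i ≠ k`, hence equals `α_k = -a y`. -/
theorem mem_range_delta_of_neg_apply_eq {a : V ≃ₗᵢ[ℝ] V} (ha : d.NegatesPos a) {y : V}
    (hy : y ∈ d.Pos) {k : Fin d.r} (h : -(a y) = d.Δ k) : y ∈ Set.range d.Δ := by
  obtain ⟨c, rfl⟩ := d.hPosComb y hy
  obtain ⟨j, hj⟩ : ∃ j, c j ≠ 0 := by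
    by_contra! hc
    exact d.ne_zero_of_mem_phi (d.mem_phi_of_mem_pos hy) (by simp [hc])
  have hjk : -(a (d.Δ j)) = d.Δ k := by
    refine d.eq_delta_of_inner_fw_eq_zero (ha _ (d.hΔPos j)) fun i hi => ?_
    have hsum := d.inner_fw_delta_of_ne hi
    rw [← h, inner_neg_apply_sum, Finset.sum_eq_zero_iff_of_nonneg fun l _ =>
      mul_nonneg (Nat.cast_nonneg _) (d.inner_fw_nonneg_of_mem_pos (ha _ (d.hΔPos l)) i)] at hsum
    exact (mul_eq_zero.mp (hsum j (Finset.mem_univ j))).resolve_left (Nat.cast_ne_zero.mpr hj)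
  exact ⟨j, a.injective (neg_inj.mp (hjk.trans h.symm))⟩

section

variable {d}

namespace NegatesPos

variable {a : V ≃ₗᵢ[ℝ] V}

theorem symm (ha : d.NegatesPos a) : d.NegatesPos a.symm :=
  fun _ hy => neg_symm_mem_of_forall_neg_mem ha hy

theorem apply_mem_phi (ha : d.NegatesPos a) {x : V} (hx : x ∈ d.Φ) : a x ∈ d.Φ := by
  rcases d.mem_pos_or_neg_mem_pos hx with h | h
  · simpa using d.neg_mem_phi (d.mem_phi_of_mem_pos (ha x h))
  · simpa using d.mem_phi_of_mem_pos (ha _ h)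

theorem neg_apply_mem_pos_iff (ha : d.NegatesPos a) {x : V} (hx : x ∈ d.Φ) :
    -(a x) ∈ d.Pos ↔ x ∈ d.Pos := by
  refine ⟨fun h => ?_, ha x⟩
  by_contra hx'
  have := ha _ ((d.neg_mem_pos_iff hx).mpr hx')
  rw [map_neg, neg_neg] at this
  exact d.neg_not_mem_pos this h

theorem apply_mem_pos_iff (ha : d.NegatesPos a) {x : V} (hx : x ∈ d.Φ) :
    a x ∈ d.Pos ↔ x ∉ d.Pos := by
  rw [← d.neg_mem_pos_iff hx, ← ha.neg_apply_mem_pos_iff (d.neg_mem_phi hx), map_neg, neg_neg]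

theorem neg_apply_delta_mem (ha : d.NegatesPos a) (k : Fin d.r) :
    -(a (d.Δ k)) ∈ Set.range d.Δ :=
  d.mem_range_delta_of_neg_apply_eq ha.symm (ha _ (d.hΔPos k)) (k := k) (by simp)

theorem neg_apply_mem_range_delta_iff (ha : d.NegatesPos a) {x : V} :
    -(a x) ∈ Set.range d.Δ ↔ x ∈ Set.range d.Δ := by
  refine ⟨fun ⟨m, hm⟩ => ?_, fun ⟨k, hk⟩ => hk ▸ ha.neg_apply_delta_mem k⟩
  simpa [hm] using ha.symm.neg_apply_delta_mem m

end NegatesPos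

namespace NegatesDeltaP

variable {p : Fin d.r} {b : V ≃ₗᵢ[ℝ] V}

theorem neg_apply_mem (hb : d.NegatesDeltaP p b) {x : V} (hx : x ∈ d.DeltaP p) :
    -(b x) ∈ d.DeltaP p := by
  obtain ⟨j, hj, rfl⟩ := hx
  exact hb j hj

theorem symm (hb : d.NegatesDeltaP p b) : d.NegatesDeltaP p b.symm := fun j hj =>
  d.mem_deltaPFin_iff.mp <| neg_symm_mem_of_forall_neg_mem
    (fun _ hx => d.mem_deltaPFin_iff.mpr (hb.neg_apply_mem (d.mem_deltaPFin_iff.mp hx)))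
    (d.mem_deltaPFin_iff.mpr ⟨j, hj, rfl⟩)

theorem neg_apply_mem_iff (hb : d.NegatesDeltaP p b) {x : V} :
    -(b x) ∈ d.DeltaP p ↔ x ∈ d.DeltaP p :=
  ⟨fun h => by simpa using hb.symm.neg_apply_mem h, hb.neg_apply_mem⟩

/-- `b` negates `Δ_p` and fixes `λ_p`, so it sends the nonnegative combinations of `Δ_p`
in `Φ⁺` to nonpositive ones. -/
theorem neg_apply_mem_phiPpos (hbW : b ∈ d.Wp p) (hb : d.NegatesDeltaP p b) {α : V}
    (hα : α ∈ d.PhiPpos p) : -(b α) ∈ d.PhiPpos p := by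
  rw [d.mem_phiPpos_iff] at hα ⊢
  obtain ⟨hαpos, hα0⟩ := hα
  have hbα : -(b α) ∈ d.Φ := d.neg_mem_phi
    ((d.apply_mem_phi_iff (d.Wp_le_W p hbW) α).mpr (d.mem_phi_of_mem_pos hαpos))
  refine ⟨d.mem_pos_of_inner_fw_nonneg hbα fun i => ?_,
    by rw [inner_neg_right, d.inner_fw_apply_of_mem_Wp hbW, hα0, neg_zero]⟩
  obtain ⟨c, rfl⟩ := d.hPosComb α hαpos
  rw [inner_neg_apply_sum]
  refine Finset.sum_nonneg fun j _ => ?_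
  by_cases hj : j = p
  · rw [hj, d.coeff_eq_zero_of_inner_fw_eq_zero hα0, Nat.cast_zero, zero_mul]
  · exact mul_nonneg (Nat.cast_nonneg _)
      (d.inner_fw_nonneg_of_mem_pos (d.mem_pos_of_mem_deltaP (hb j hj)) i)

theorem apply_rhoP (hbW : b ∈ d.Wp p) (hb : d.NegatesDeltaP p b) :
    b (d.rhoP p) = -d.rhoP p := by
  have hsum : ∑ α ∈ d.PhiPpos p, -(b α) = ∑ α ∈ d.PhiPpos p, α :=
    Finset.sum_comp_eq_of_injOn (fun _ hα => hb.neg_apply_mem_phiPpos hbW hα)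
      (fun _ _ _ _ h => b.injective (neg_inj.mp h)) id
  rw [rhoP, map_smul, map_sum, ← neg_neg (∑ α ∈ d.PhiPpos p, b α), ← Finset.sum_neg_distrib,
    hsum, smul_neg]

theorem apply_rho (hbW : b ∈ d.Wp p) (hb : d.NegatesDeltaP p b) :
    b d.rho = d.cp p • d.fw p - d.rho := by
  have hrhoP : d.rhoP p = d.rho - (d.cp p / 2) • d.fw p := by
    rw [← d.rho_sub_rhoP, sub_sub_cancel]
  rw [← sub_add_cancel d.rho (d.rhoP p), map_add, d.rho_sub_rhoP, map_smul,
    d.apply_fw_of_mem_Wp hbW, hb.apply_rhoP hbW, hrhoP]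
  module

theorem ht_symm_apply (hbW : b ∈ d.Wp p) (hb : d.NegatesDeltaP p b) (α : V) :
    d.ht (b.symm α) = d.cp p * ⟪d.fw p, coroot V α⟫ - d.ht α := by
  rw [ht, inner_coroot_symm_apply, hb.apply_rho hbW, inner_sub_left, real_inner_smul_left, ht]

end NegatesDeltaP

end

section

variable {p : Fin d.r} {a b w : V ≃ₗᵢ[ℝ] V}

theorem deltaIdx_neg_add {v : V ≃ₗᵢ[ℝ] V} {α : V} (hvα : v α ∈ d.Φ) :
    d.deltaIdx v (-α) + d.deltaIdx v α = 1 := by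
  rcases d.hPosDec (v α) hvα with ⟨h1, h2⟩ | ⟨h1, h2⟩ <;> simp [deltaIdx, h1, h2]

theorem deltaIdx_mul_symm_add (ha : d.NegatesPos a) {α : V} (hwα : w α ∈ d.Φ) :
    d.deltaIdx (a * w * b) (b.symm α) + d.deltaIdx w α = 1 := by
  simp only [deltaIdx, mul_mul_apply, LinearIsometryEquiv.apply_symm_apply,
    ha.apply_mem_pos_iff hwα]
  split_ifs <;> rfl

/-- The factor `F(⟨λ_p, α^∨⟩ s + ht α^∨ + δ_{α,v})` of `X̃_{p,v}` (`F = ξ`) and of `Q_p`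
(`F z = z (z - 1)`); both satisfy `F (1 - z) = F z`. -/
def rootTerm (F : ℂ → ℂ) (p : Fin d.r) (v : V ≃ₗᵢ[ℝ] V) (s : ℂ) (α : V) : ℂ :=
  F ((⟪d.fw p, coroot V α⟫ : ℂ) * s + (d.ht α : ℂ) + (d.deltaIdx v α : ℂ))

variable {F : ℂ → ℂ}

theorem rootTerm_neg (hF : ∀ z, F (1 - z) = F z) {v : V ≃ₗᵢ[ℝ] V} (s : ℂ) {α : V}
    (hvα : v α ∈ d.Φ) : d.rootTerm F p v s (-α) = d.rootTerm F p v s α := by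
  have hδ : (d.deltaIdx v (-α) : ℂ) = 1 - d.deltaIdx v α := by
    rw [eq_sub_iff_add_eq]
    exact_mod_cast d.deltaIdx_neg_add hvα
  unfold rootTerm
  convert hF _ using 2
  rw [coroot_neg, inner_neg_right, ht_neg, hδ]
  push_cast
  ring

theorem rootTerm_reflect (hF : ∀ z, F (1 - z) = F z) (ha : d.NegatesPos a) (hbW : b ∈ d.Wp p)
    (hb : d.NegatesDeltaP p b) (s : ℂ) {α : V} (hwα : w α ∈ d.Φ) :
    d.rootTerm F p w (-(d.cp p : ℂ) - s) α = d.rootTerm F p (a * w * b) s (b.symm α) := by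
  have hδ : (d.deltaIdx (a * w * b) (b.symm α) : ℂ) = 1 - d.deltaIdx w α := by
    rw [eq_sub_iff_add_eq]
    exact_mod_cast d.deltaIdx_mul_symm_add ha hwα
  unfold rootTerm
  rw [inner_coroot_symm_apply, d.apply_fw_of_mem_Wp hbW, hb.ht_symm_apply hbW, hδ]
  convert (hF _).symm using 2
  push_cast
  ring

theorem prod_rootTerm_reflect (hF : ∀ z, F (1 - z) = F z) (ha : d.NegatesPos a)
    (hbW : b ∈ d.Wp p) (hb : d.NegatesDeltaP p b) (hw : w ∈ d.W) (s : ℂ) :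
    ∏ α ∈ d.Pos.filter (fun α => α ∉ d.DeltaP p), d.rootTerm F p w (-(d.cp p : ℂ) - s) α =
      ∏ α ∈ d.Pos.filter (fun α => α ∉ d.DeltaP p), d.rootTerm F p (a * w * b) s α := by
  have hwΦ : ∀ α ∈ d.Pos.filter (fun α => α ∉ d.DeltaP p), w α ∈ d.Φ := fun α hα =>
    (d.apply_mem_phi_iff hw α).mpr (d.mem_phi_of_mem_pos (Finset.mem_filter.mp hα).1)
  rw [Finset.prod_congr rfl fun α hα => d.rootTerm_reflect hF ha hbW hb s (hwΦ α hα)]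
  refine Finset.prod_comp_eq_of_mapsTo_or_neg b.symm.injective (map_neg _)
    (fun α hα hα' => d.neg_not_mem_pos (Finset.mem_filter.mp hα).1 (Finset.mem_filter.mp hα').1)
    (fun α hα => ?_) (fun α hα => d.rootTerm_neg hF s ?_)
  · obtain ⟨hαpos, hαP⟩ := Finset.mem_filter.mp hα
    simp only [Finset.mem_filter]
    rcases d.mem_pos_or_neg_mem_pos
      (d.symm_apply_mem_phi_of_mem_Wp hbW (d.mem_phi_of_mem_pos hαpos)) with h | h
    · refine Or.inl ⟨h, fun hmem => d.neg_not_mem_pos hαpos (d.mem_pos_of_mem_deltaP (p := p) ?_)⟩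
      simpa using hb.neg_apply_mem hmem
    · exact Or.inr ⟨h, fun hmem => hαP (by simpa using hb.neg_apply_mem hmem)⟩
  · rw [mul_mul_apply, b.apply_symm_apply]
    exact ha.apply_mem_phi (hwΦ α hα)

theorem prod_preimageDelta_reflect (ha : d.NegatesPos a) (hbW : b ∈ d.Wp p)
    (hb : d.NegatesDeltaP p b) (s : ℂ) :
    ∏ α ∈ d.Φ.filter (fun α => w α ∈ Set.range d.Δ ∧ α ∉ d.DeltaP p),
        ((⟪d.fw p, coroot V α⟫ : ℂ) * (-(d.cp p : ℂ) - s) + (d.ht α : ℂ) - 1) =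
      ∏ α ∈ d.Φ.filter (fun α => (a * w * b) α ∈ Set.range d.Δ ∧ α ∉ d.DeltaP p),
        ((⟪d.fw p, coroot V α⟫ : ℂ) * s + (d.ht α : ℂ) - 1) := by
  refine Finset.prod_nbij' (fun α => -(b.symm α)) (fun α => -(b α)) (fun α hα => ?_)
    (fun α hα => ?_) (fun α _ => by simp) (fun α _ => by simp) (fun α _ => ?_)
  · rw [Finset.mem_filter] at hα ⊢
    refine ⟨d.neg_mem_phi (d.symm_apply_mem_phi_of_mem_Wp hbW hα.1), ?_,
      fun h => hα.2.2 (by simpa using hb.neg_apply_mem h)⟩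
    simpa [mul_mul_apply] using ha.neg_apply_mem_range_delta_iff.mpr hα.2.1
  · rw [Finset.mem_filter] at hα ⊢
    refine ⟨d.neg_mem_phi ((d.apply_mem_phi_iff (d.Wp_le_W p hbW) α).mpr hα.1), ?_,
      fun h => hα.2.2 (hb.neg_apply_mem_iff.mp h)⟩
    rw [map_neg, ← ha.neg_apply_mem_range_delta_iff, map_neg, neg_neg]
    exact hα.2.1
  · rw [coroot_neg, inner_neg_right, inner_coroot_symm_apply, d.apply_fw_of_mem_Wp hbW, ht_neg,
      hb.ht_symm_apply hbW]
    push_cast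
    ring

theorem card_filter_pos_reflect (ha : d.NegatesPos a) (hbW : b ∈ d.Wp p)
    (hb : d.NegatesDeltaP p b) (hw : w ∈ d.W) :
    ((d.DeltaPFin p).filter (fun α => w α ∈ d.Pos)).card =
      ((d.DeltaPFin p).filter (fun α => (a * w * b) α ∈ d.Pos)).card := by
  refine Finset.card_nbij' (fun α => -(b.symm α)) (fun α => -(b α)) (fun α hα => ?_)
    (fun α hα => ?_) (fun α _ => by simp) (fun α _ => by simp)
  · rw [Finset.mem_coe, Finset.mem_filter, d.mem_deltaPFin_iff] at hα ⊢
    exact ⟨hb.symm.neg_apply_mem hα.1, by simpa [mul_mul_apply] using ha _ hα.2⟩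
  · rw [Finset.mem_coe, Finset.mem_filter, d.mem_deltaPFin_iff] at hα ⊢
    have hwbα : w (b α) ∈ d.Φ := (d.apply_mem_phi_iff hw _).mpr
      ((d.apply_mem_phi_iff (d.Wp_le_W p hbW) α).mpr
        (d.mem_phi_of_mem_pos (d.mem_pos_of_mem_deltaP hα.1)))
    refine ⟨hb.neg_apply_mem hα.1, ?_⟩
    rw [map_neg, d.neg_mem_pos_iff hwbα, ← ha.apply_mem_pos_iff hwbα]
    exact hα.2

theorem Xtilde_reflect (ha : d.NegatesPos a) (hbW : b ∈ d.Wp p) (hb : d.NegatesDeltaP p b)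
    (hw : w ∈ d.W) (s : ℂ) : d.Xtilde p w (-(d.cp p : ℂ) - s) = d.Xtilde p (a * w * b) s := by
  rw [Xtilde, Xtilde, d.card_filter_pos_reflect ha hbW hb hw]
  exact congrArg _ (d.prod_rootTerm_reflect xi_one_sub ha hbW hb hw s)

theorem Qfactor_reflect (ha : d.NegatesPos a) (hbW : b ∈ d.Wp p) (hb : d.NegatesDeltaP p b)
    (hw : w ∈ d.W) (s : ℂ) : d.Qfactor p w (-(d.cp p : ℂ) - s) = d.Qfactor p (a * w * b) s := by
  rw [Qfactor, Qfactor, d.card_filter_pos_reflect ha hbW hb hw,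
    d.prod_preimageDelta_reflect ha hbW hb]
  exact congrArg _
    (d.prod_rootTerm_reflect (F := fun z => z * (z - 1)) (fun z => by ring) ha hbW hb hw s)

theorem mul_mem_frakW (haW : a ∈ d.W) (ha : d.NegatesPos a) (hbW : b ∈ d.Wp p)
    (hb : d.NegatesDeltaP p b) (hw : w ∈ d.frakW p) : a * w * b ∈ d.frakW p := by
  obtain ⟨hwW, hwΔ⟩ := hw
  refine ⟨mul_mem (mul_mem haW hwW) (d.Wp_le_W p hbW), fun j hj => ?_⟩
  obtain ⟨k, hk, hbk⟩ := hb j hj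
  have happ : (a * w * b) (d.Δ j) = -(a (w (d.Δ k))) := by
    rw [mul_mul_apply, hbk, map_neg, map_neg, neg_neg]
  rw [happ, d.mem_negS_iff, neg_neg]
  rcases hwΔ k hk with h | h
  · exact Or.inl (ha.neg_apply_mem_range_delta_iff.mpr h)
  · rw [d.mem_negS_iff] at h
    exact Or.inr (by simpa using ha _ h)

theorem bijOn_frakW (haW : a ∈ d.W) (ha : d.NegatesPos a) (hbW : b ∈ d.Wp p)
    (hb : d.NegatesDeltaP p b) : Set.BijOn (fun v => a * v * b) (d.frakW p) (d.frakW p) :=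
  Set.InvOn.bijOn (f' := fun v => a⁻¹ * v * b⁻¹) ⟨fun v _ => by group, fun v _ => by group⟩
    (fun _ hv => d.mul_mem_frakW haW ha hbW hb hv)
    (fun _ hv => d.mul_mem_frakW (inv_mem haW) ha.symm (inv_mem hbW) hb.symm hv)

theorem Qtilde_reflect (haW : a ∈ d.W) (ha : d.NegatesPos a) (hbW : b ∈ d.Wp p)
    (hb : d.NegatesDeltaP p b) (hw : w ∈ d.frakW p) (s : ℂ) :
    d.Qtilde p w (-(d.cp p : ℂ) - s) = d.Qtilde p (a * w * b) s :=
  finprod_mem_eq_of_bijOn _ ((d.bijOn_frakW haW ha hbW hb).sdiff_singleton hw)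
    fun _ hv => d.Qfactor_reflect ha hbW hb hv.1.1 s

theorem Qp_reflect (haW : a ∈ d.W) (ha : d.NegatesPos a) (hbW : b ∈ d.Wp p)
    (hb : d.NegatesDeltaP p b) (s : ℂ) : d.Qp p (-(d.cp p : ℂ) - s) = d.Qp p s :=
  finprod_mem_eq_of_bijOn _ (d.bijOn_frakW haW ha hbW hb)
    fun _ hv => d.Qfactor_reflect ha hbW hb hv.1 s

theorem Xp_reflect (haW : a ∈ d.W) (ha : d.NegatesPos a) (hbW : b ∈ d.Wp p)
    (hb : d.NegatesDeltaP p b) (s : ℂ) : d.Xp p (-(d.cp p : ℂ) - s) = d.Xp p s :=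
  finsum_mem_eq_of_bijOn _ (d.bijOn_frakW haW ha hbW hb) fun _ hv => by
    rw [d.Qtilde_reflect haW ha hbW hb hv, d.Xtilde_reflect ha hbW hb hv.1]

end

end RootSystemData

end Weng

open Weng

/-- For every `w ∈ 𝔚_p` one has `w₀ w w_p ∈ 𝔚_p`, and there is a sign `ε_p ∈ {1,-1}`,
depending only on `p`, such that `X̃_{p,w}(-c_p-s) = X̃_{p,w₀ w w_p}(s)`,
`Q̃_{p,w}(-c_p-s) = ε_p Q̃_{p,w₀ w w_p}(s)` and `Q_p(-c_p-s) = ε_p Q_p(s)`;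
consequently `X_p(-c_p-s) = ε_p X_p(s)`. -/
theorem weng_Xtilde_Qtilde_functional_equation
    {V : Type} [NormedAddCommGroup V] [InnerProductSpace ℝ V] [FiniteDimensional ℝ V]
    (d : RootSystemData V) (p : Fin d.r)
    (w₀ wₚ : V ≃ₗᵢ[ℝ] V)
    (hw₀W : w₀ ∈ d.W) (hw₀long : ∀ α ∈ d.Pos, -(w₀ α) ∈ d.Pos)
    (hwₚW : wₚ ∈ d.Wp p) (hwₚlong : ∀ j : Fin d.r, j ≠ p → -(wₚ (d.Δ j)) ∈ d.DeltaP p) :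
    (∀ w ∈ d.frakW p, w₀ * w * wₚ ∈ d.frakW p) ∧
    ∃ ε : ℂ, (ε = 1 ∨ ε = -1) ∧
      ∀ w ∈ d.frakW p, ∀ s : ℂ,
        d.Xtilde p w (-(d.cp p : ℂ) - s) = d.Xtilde p (w₀ * w * wₚ) s ∧
        d.Qtilde p w (-(d.cp p : ℂ) - s) = ε * d.Qtilde p (w₀ * w * wₚ) s ∧
        d.Qp p (-(d.cp p : ℂ) - s) = ε * d.Qp p s ∧
        d.Xp p (-(d.cp p : ℂ) - s) = ε * d.Xp p s := by
  refine ⟨fun w hw => d.mul_mem_frakW hw₀W hw₀long hwₚW hwₚlong hw, 1, Or.inl rfl,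
    fun w hw s => ?_⟩
  simp only [one_mul]
  exact ⟨d.Xtilde_reflect hw₀long hwₚW hwₚlong hw.1 s,
    d.Qtilde_reflect hw₀W hw₀long hwₚW hwₚlong hw s, d.Qp_reflect hw₀W hw₀long hwₚW hwₚlong s,
    d.Xp_reflect hw₀W hw₀long hwₚW hwₚlong s⟩
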